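/- For every integer n ≥ 0, the images in C(n) of the monomials τ^E ξ^R with e_s ∈ {0,1} for 0 ≤ s ≤ n, r₁ ≥ 0 arbitrary, and 0 ≤ r_s < 2^{n+1−s} for 2 ≤ s ≤ n, form a basis of C(n) as a free k-module. (Paper's Lemma on left H-bases of C(n)_{∗,∗}, part (a), case ℓ = 2.) -/

import Mathlib

open MvPolynomial TensorProduct

noncomputable section

/-- Variables of the dual motivic Steenrod algebra: `.inl i` is `τᵢ`, `.inr i` is `ξ_{i+1}`. -/
abbrev MotVar : Type := ℕ ⊕ ℕ

variable (k : Type) [CommRing k]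

/-- `τᵢ` as a polynomial generator. -/
def tP (i : ℕ) : MvPolynomial MotVar k := X (Sum.inl i)

/-- `ξᵢ` as a polynomial generator, with the convention `ξ₀ = 1`. -/
def xP : ℕ → MvPolynomial MotVar k
  | 0 => 1
  | i + 1 => X (Sum.inr i)

variable (τ ρ : k)

/-- The ideal of defining relations `τᵢ² = τ·ξ_{i+1} + ρ·τ_{i+1} + ρ·τ₀·ξ_{i+1}`. -/
def relIdeal : Ideal (MvPolynomial MotVar k) :=
  Ideal.span (Set.range fun i : ℕ =>
    tP k i ^ 2 - (C τ * xP k (i + 1) + C ρ * tP k (i + 1) + C ρ * tP k 0 * xP k (i + 1)))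

/-- The mod 2 dual motivic Steenrod algebra over `k` (with `H_{*,*}` replaced by `k`). -/
abbrev DSA : Type := MvPolynomial MotVar k ⧸ relIdeal k τ ρ

/-- The canonical projection onto the dual Steenrod algebra. -/
def mkDSA : MvPolynomial MotVar k →+* DSA k τ ρ := Ideal.Quotient.mk _

/-- The monomial `τ^E ξ^R`, where `R i` records the exponent `r_{i+1}` of `ξ_{i+1}`. -/
def monP (E R : ℕ →₀ ℕ) : MvPolynomial MotVar k :=
  (E.prod fun i e => tP k i ^ e) * (R.prod fun i r => xP k (i + 1) ^ r)

/-- The ideal `J(n) ⊆ 𝒜`, generated by the `τ_m` with `m ≥ n+1` and the `ξᵢ^{2^j}`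
with `i ≥ 2`, `j ≥ 0`, `i + j ≥ n+1`. -/
def Jideal (n : ℕ) : Ideal (DSA k τ ρ) :=
  Ideal.span ({x | ∃ m : ℕ, n + 1 ≤ m ∧ x = mkDSA k τ ρ (tP k m)} ∪
    {x | ∃ i j : ℕ, 2 ≤ i ∧ n + 1 ≤ i + j ∧ x = mkDSA k τ ρ (xP k i ^ 2 ^ j)})

/-- The quotient `C(n) = 𝒜/J(n)`. -/
abbrev Cn (n : ℕ) : Type := DSA k τ ρ ⧸ Jideal k τ ρ n

/-- The index set for the monomial basis of `C(n)`: every `e_s ∈ {0,1}` for `0 ≤ s ≤ n`,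
`r₁ ≥ 0` arbitrary, and `0 ≤ r_s < 2^{n+1-s}` for `2 ≤ s ≤ n` (recall `R i = r_{i+1}`). -/
def IdxC (n : ℕ) : Type :=
  {p : (ℕ →₀ ℕ) × (ℕ →₀ ℕ) //
    (∀ s, p.1 s ≤ 1) ∧ (∀ s, n < s → p.1 s = 0) ∧ (∀ i, 1 ≤ i → p.2 i < 2 ^ (n - i))}

/-!
Give `τᵢ` weight 3 and `ξᵢ` weight 1. The relation rewrites `τᵢ²` into terms of smaller weight,
so every monomial reduces to a combination of monomials with all `eᵢ ≤ 1`; those divisible by a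
generator of `J(n)` die in `C(n)`, and the survivors are exactly the claimed basis. This rewriting
defines normal-form coordinates on the polynomial ring. Rewrites at different indices commute, so
the coordinates do not depend on the order of rewriting; hence they vanish on the relations and on
`J(n)`, and descend to an isomorphism of `C(n)` with the free module on the index set, whose
inverse sends each basis vector to its monomial.
-/

namespace CnBasis

open Finsupp

variable {k}

def idealInKer {A M F : Type*} [Semiring A] [AddCommMonoid M] [FunLike F A M]
    [AddMonoidHomClass F A M] (f : F) : Ideal A where
  carrier := {x | ∀ a, f (a * x) = 0}
  add_mem' {x y} hx hy a := by simp [mul_add, hx a, hy a]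
  zero_mem' a := by simp
  smul_mem' b x hx a := by simpa [mul_assoc] using hx (a * b)

lemma mem_idealInKer_of_monomial {σ R M : Type*} [CommSemiring R] [AddCommMonoid M]
    [Module R M] {f : MvPolynomial σ R →ₗ[R] M} {x : MvPolynomial σ R}
    (h : ∀ d, f (monomial d 1 * x) = 0) : x ∈ idealInKer f := by
  intro q
  induction q using MvPolynomial.induction_on' with
  | monomial d a =>
    rw [show monomial d a = a • monomial d 1 by rw [smul_monomial, smul_eq_mul, mul_one],
      smul_mul_assoc, map_smul, h, smul_zero]
  | add p q hp hq => rw [add_mul, map_add, hp, hq, add_zero]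

abbrev tExp (i : ℕ) : MotVar →₀ ℕ := single (Sum.inl i) 1

abbrev xExp (i : ℕ) : MotVar →₀ ℕ := single (Sum.inr i) 1

def wt : (MotVar →₀ ℕ) →+ ℕ := weight (Sum.elim (fun _ => 3) (fun _ => 1))

@[simp] lemma wt_single_inl (i e : ℕ) : wt (single (Sum.inl i) e) = 3 * e := by
  simp [wt, weight_single, mul_comm]

@[simp] lemma wt_single_inr (i e : ℕ) : wt (single (Sum.inr i) e) = e := by
  simp [wt, weight_single]

lemma exists_eq_add_single_two {d : MotVar →₀ ℕ} {i : ℕ} (hi : 2 ≤ d (Sum.inl i)) :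
    ∃ c, d = c + single (Sum.inl i) 2 :=
  ⟨_, (tsub_add_cancel_of_le (single_le_iff.mpr hi)).symm⟩

lemma wt_tsub_add_lt {d x : MotVar →₀ ℕ} {i : ℕ} (hi : 2 ≤ d (Sum.inl i)) (hx : wt x < 6) :
    wt (d - single (Sum.inl i) 2 + x) < wt d := by
  obtain ⟨c, rfl⟩ := exists_eq_add_single_two hi
  simp only [add_tsub_cancel_right, map_add, wt_single_inl]
  omega

section relRHS

variable {M : Type*} [AddCommMonoid M] [Module k M]

/-- Applying `f` to the right-hand side of `τ^c τᵢ² = τ^c (τ ξ_{i+1} + ρ τ_{i+1} + ρ τ₀ ξ_{i+1})`,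
read on exponents. -/
def relRHS (f : (MotVar →₀ ℕ) → M) (c : MotVar →₀ ℕ) (i : ℕ) : M :=
  τ • f (c + xExp i) + ρ • f (c + tExp (i + 1)) + ρ • f (c + (tExp 0 + xExp i))

lemma relRHS_comm (f : (MotVar →₀ ℕ) → M) (c : MotVar →₀ ℕ) (i j : ℕ) :
    relRHS τ ρ (fun x => relRHS τ ρ f x i) c j = relRHS τ ρ (fun y => relRHS τ ρ f y j) c i := by
  simp only [relRHS, smul_add, smul_smul, add_right_comm c]
  module

lemma map_relRHS {N : Type*} [AddCommMonoid N] [Module k N] (g : M →ₗ[k] N)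
    (f : (MotVar →₀ ℕ) → M) (c : MotVar →₀ ℕ) (i : ℕ) :
    g (relRHS τ ρ f c i) = relRHS τ ρ (g ∘ f) c i := by
  simp [relRHS]

end relRHS

/-- `τ^d` is divisible by a generator of `J(n)`: some `τ_m` with `m > n`, or `ξ_{s+1}^{2^{n-s}}`
with `s ≥ 1`, the least power of `ξ_{s+1}` in `J(n)`. -/
def JDivisible (n : ℕ) (d : MotVar →₀ ℕ) : Prop :=
  (∃ m, n < m ∧ d (Sum.inl m) ≠ 0) ∨ (∃ s, 1 ≤ s ∧ 2 ^ (n - s) ≤ d (Sum.inr s))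

lemma JDivisible.add_right {n : ℕ} {d : MotVar →₀ ℕ} (h : JDivisible n d) (x : MotVar →₀ ℕ) :
    JDivisible n (d + x) := by
  rcases h with ⟨m, hm, hd⟩ | ⟨s, hs, hd⟩
  · exact Or.inl ⟨m, hm, by simp only [Finsupp.add_apply]; omega⟩
  · exact Or.inr ⟨s, hs, by simp only [Finsupp.add_apply]; omega⟩

lemma JDivisible.relRHS_terms {n i : ℕ} {c : MotVar →₀ ℕ}
    (h : JDivisible n (c + single (Sum.inl i) 2)) :
    JDivisible n (c + xExp i) ∧ JDivisible n (c + tExp (i + 1)) ∧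
      JDivisible n (c + (tExp 0 + xExp i)) := by
  suffices JDivisible n c ∨ n < i by
    rcases this with hc | hi
    · exact ⟨hc.add_right _, hc.add_right _, hc.add_right _⟩
    have hξ : ∀ x, JDivisible n (c + (x + xExp i)) := fun x =>
      Or.inr ⟨i, by omega, by simp [Nat.sub_eq_zero_of_le hi.le]; omega⟩
    exact ⟨by simpa using hξ 0, Or.inl ⟨i + 1, by omega, by simp⟩, hξ _⟩
  rcases h with ⟨m, hm, hd⟩ | ⟨s, hs, hd⟩
  · by_cases hmi : m = i
    · exact Or.inr (hmi ▸ hm)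
    · exact Or.inl (Or.inl ⟨m, hm, by simpa [single_apply, Ne.symm hmi] using hd⟩)
  · exact Or.inl (Or.inr ⟨s, hs, by simpa using hd⟩)

def toIdxC {n : ℕ} (d : MotVar →₀ ℕ) (hJ : ¬ JDivisible n d) (hτ : ∀ i, d (Sum.inl i) ≤ 1) :
    IdxC n :=
  ⟨sumFinsuppEquivProdFinsupp d, hτ, fun s hs => by
    by_contra h; exact hJ (Or.inl ⟨s, hs, h⟩), fun i hi => by
    by_contra h; exact hJ (Or.inr ⟨i, hi, not_lt.mp h⟩)⟩

open Classical in
/-- The coordinates of the image of `τ^d` in `C(n)` in the basis of monomials indexed by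
`IdxC n`. -/
def nf (n : ℕ) (d : MotVar →₀ ℕ) : IdxC n →₀ k :=
  if hJ : JDivisible n d then 0
  else if hτ : ∃ i, 2 ≤ d (Sum.inl i) then
    τ • nf n (d - single (Sum.inl hτ.choose) 2 + xExp hτ.choose)
    + ρ • nf n (d - single (Sum.inl hτ.choose) 2 + tExp (hτ.choose + 1))
    + ρ • nf n (d - single (Sum.inl hτ.choose) 2 + (tExp 0 + xExp hτ.choose))
  else single (toIdxC d hJ fun i => Nat.le_of_lt_succ (not_le.mp (not_exists.mp hτ i))) 1
termination_by wt d
decreasing_by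
  all_goals exact wt_tsub_add_lt hτ.choose_spec (by simp)

section nf

variable {n : ℕ}

lemma nf_of_JDivisible {d : MotVar →₀ ℕ} (h : JDivisible n d) : nf τ ρ n d = 0 := by
  rw [nf, dif_pos h]

lemma exists_nf_eq_relRHS {d : MotVar →₀ ℕ} (hJ : ¬ JDivisible n d)
    (hτ : ∃ i, 2 ≤ d (Sum.inl i)) :
    ∃ j, 2 ≤ d (Sum.inl j) ∧
      nf τ ρ n d = relRHS τ ρ (nf τ ρ n) (d - single (Sum.inl j) 2) j := by
  refine ⟨hτ.choose, hτ.choose_spec, ?_⟩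
  rw [nf, dif_neg hJ, dif_pos hτ]
  rfl

lemma nf_sumElim (p : IdxC n) : nf τ ρ n (p.1.1.sumElim p.1.2) = single p 1 := by
  obtain ⟨⟨E, R⟩, hE, hEn, hR⟩ := p
  have hJ : ¬ JDivisible n (E.sumElim R) := by
    rintro (⟨m, hm, hd⟩ | ⟨s, hs, hd⟩)
    · exact hd (hEn m hm)
    · exact (hR s hs).not_ge hd
  have hτ : ¬ ∃ i, 2 ≤ (E.sumElim R) (Sum.inl i) := fun ⟨i, hi⟩ => (hE i).not_gt hi
  rw [nf, dif_neg hJ, dif_neg hτ]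
  exact congrArg (single · 1) (Subtype.ext (by simp [toIdxC]))

/-- `nf` rewrites one chosen `τⱼ²`; any other `τᵢ²` may be rewritten instead. -/
theorem nf_add_two (c : MotVar →₀ ℕ) (i : ℕ) :
    nf τ ρ n (c + single (Sum.inl i) 2) = relRHS τ ρ (nf τ ρ n) c i := by
  by_cases hJ : JDivisible n (c + single (Sum.inl i) 2)
  · obtain ⟨h₁, h₂, h₃⟩ := hJ.relRHS_terms
    simp [relRHS, nf_of_JDivisible, hJ, h₁, h₂, h₃]
  obtain ⟨j, hj, hnf⟩ := exists_nf_eq_relRHS τ ρ hJ ⟨i, by simp⟩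
  rw [hnf]
  by_cases hji : j = i
  · rw [hji, add_tsub_cancel_right]
  obtain ⟨c', hc⟩ := exists_eq_add_single_two (i := j) (d := c)
    (by simpa [single_apply, hji] using hj)
  rw [hc, add_right_comm, add_tsub_cancel_right]
  calc relRHS τ ρ (nf τ ρ n) (c' + single (Sum.inl i) 2) j
      = relRHS τ ρ (fun x => relRHS τ ρ (nf τ ρ n) x i) c' j := by
        conv_lhs => unfold relRHS; simp only [add_right_comm c' (single (Sum.inl i) 2)]
        rw [nf_add_two (c' + xExp j),
          nf_add_two (c' + tExp (j + 1)), nf_add_two (c' + (tExp 0 + xExp j))]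
        rfl
    _ = relRHS τ ρ (fun y => relRHS τ ρ (nf τ ρ n) y j) c' i := relRHS_comm τ ρ _ c' i j
    _ = relRHS τ ρ (nf τ ρ n) (c' + single (Sum.inl j) 2) i := by
        conv_rhs => unfold relRHS; simp only [add_right_comm c' (single (Sum.inl j) 2)]
        rw [nf_add_two (c' + xExp i),
          nf_add_two (c' + tExp (i + 1)), nf_add_two (c' + (tExp 0 + xExp i))]
        rfl
termination_by wt c
decreasing_by all_goals simp only [hc, map_add, wt_single_inl, wt_single_inr]; omega

end nf

def relator (i : ℕ) : MvPolynomial MotVar k :=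
  tP k i ^ 2 - (C τ * xP k (i + 1) + C ρ * tP k (i + 1) + C ρ * tP k 0 * xP k (i + 1))

lemma monomial_mul_relator (c : MotVar →₀ ℕ) (i : ℕ) :
    monomial c 1 * relator τ ρ i =
      monomial (c + single (Sum.inl i) 2) 1 - relRHS τ ρ (monomial · (1 : k)) c i := by
  simp only [relator, relRHS, tP, xP, X, monomial_pow, smul_single, one_pow, C_mul_monomial,
    monomial_mul, smul_monomial, mul_sub, mul_add, add_assoc, smul_eq_mul, mul_one, one_mul]

lemma monomial_mul_tP (c : MotVar →₀ ℕ) (m : ℕ) :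
    monomial c (1 : k) * tP k m = monomial (c + tExp m) 1 := by
  rw [tP, X, monomial_mul, mul_one]

lemma monomial_mul_xP_pow (c : MotVar →₀ ℕ) (s e : ℕ) :
    monomial c (1 : k) * xP k (s + 1) ^ e = monomial (c + single (Sum.inr s) e) 1 := by
  rw [xP, X_pow_eq_monomial, monomial_mul, mul_one]

lemma monP_eq_monomial (E R : ℕ →₀ ℕ) : monP k E R = monomial (E.sumElim R) 1 := by
  rw [monomial_eq, C_1, one_mul, prod_sumElim]
  rfl

variable (n : ℕ)

def nfL : MvPolynomial MotVar k →ₗ[k] (IdxC n →₀ k) :=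
  (basisMonomials MotVar k).constr k (nf τ ρ n)

lemma nfL_monomial (d : MotVar →₀ ℕ) : nfL τ ρ n (monomial d 1) = nf τ ρ n d := by
  simpa [nfL] using (basisMonomials MotVar k).constr_basis k (nf τ ρ n) d

lemma relator_mem_idealInKer (i : ℕ) : relator τ ρ i ∈ idealInKer (nfL τ ρ n) :=
  mem_idealInKer_of_monomial fun d => by
    rw [monomial_mul_relator, map_sub, map_relRHS, nfL_monomial, nf_add_two, sub_eq_zero]
    simp only [Function.comp_def, nfL_monomial]

lemma tP_mem_idealInKer {m : ℕ} (hm : n < m) : tP k m ∈ idealInKer (nfL τ ρ n) :=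
  mem_idealInKer_of_monomial fun d => by
    rw [monomial_mul_tP, nfL_monomial, nf_of_JDivisible]
    exact Or.inl ⟨m, hm, by simp⟩

lemma xP_pow_mem_idealInKer {i j : ℕ} (hi : 2 ≤ i) (hij : n + 1 ≤ i + j) :
    xP k i ^ 2 ^ j ∈ idealInKer (nfL τ ρ n) := by
  obtain ⟨s, rfl⟩ : ∃ s, i = s + 1 := ⟨i - 1, by omega⟩
  refine mem_idealInKer_of_monomial fun d => ?_
  rw [monomial_mul_xP_pow, nfL_monomial, nf_of_JDivisible]
  refine Or.inr ⟨s, by omega, ?_⟩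
  simpa using le_add_left (Nat.pow_le_pow_right two_pos (by omega))

def mkC : MvPolynomial MotVar k →ₗ[k] Cn k τ ρ n :=
  ((Ideal.Quotient.mkₐ k (Jideal k τ ρ n)).comp
    (Ideal.Quotient.mkₐ k (relIdeal k τ ρ))).toLinearMap

lemma mkC_apply (x : MvPolynomial MotVar k) :
    mkC τ ρ n x = Ideal.Quotient.mk (Jideal k τ ρ n) (mkDSA k τ ρ x) :=
  rfl

lemma mkC_surjective : Function.Surjective (mkC τ ρ n) :=
  Ideal.Quotient.mk_surjective.comp Ideal.Quotient.mk_surjective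

lemma ker_mkC_le_ker_nfL : LinearMap.ker (mkC τ ρ n) ≤ LinearMap.ker (nfL τ ρ n) := by
  intro x hx
  set K := idealInKer (nfL τ ρ n)
  have hrel : relIdeal k τ ρ ≤ K :=
    Ideal.span_le.mpr (Set.range_subset_iff.mpr (relator_mem_idealInKer τ ρ n))
  have hJ : Jideal k τ ρ n ≤ K.map (mkDSA k τ ρ) := by
    refine Ideal.span_le.mpr ?_
    rintro _ (⟨m, hm, rfl⟩ | ⟨i, j, hi, hij, rfl⟩)
    · exact Ideal.mem_map_of_mem _ (tP_mem_idealInKer τ ρ n hm)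
    · exact Ideal.mem_map_of_mem _ (xP_pow_mem_idealInKer τ ρ n hi hij)
  have hxK : x ∈ K := by
    have : mkDSA k τ ρ x ∈ K.map (mkDSA k τ ρ) := hJ (Ideal.Quotient.eq_zero_iff_mem.mp hx)
    rwa [← Ideal.mem_comap,
      Ideal.comap_map_of_surjective (mkDSA k τ ρ) Ideal.Quotient.mk_surjective,
      ← RingHom.ker_eq_comap_bot, mkDSA, Ideal.mk_ker, sup_eq_left.mpr hrel] at this
  simpa using hxK 1

def monC (p : IdxC n) : Cn k τ ρ n :=
  Ideal.Quotient.mk (Jideal k τ ρ n) (mkDSA k τ ρ (monP k p.1.1 p.1.2))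

lemma mkC_monomial_sumElim (p : IdxC n) :
    mkC τ ρ n (monomial (p.1.1.sumElim p.1.2) 1) = monC τ ρ n p := by
  rw [mkC_apply, monC, monP_eq_monomial]

lemma mkC_monomial_of_JDivisible {d : MotVar →₀ ℕ} (h : JDivisible n d) :
    mkC τ ρ n (monomial d 1) = 0 := by
  rw [mkC_apply, Ideal.Quotient.eq_zero_iff_mem]
  rcases h with ⟨m, hm, hd⟩ | ⟨s, hs, hd⟩
  · obtain ⟨c, rfl⟩ : ∃ c, d = c + tExp m :=
      ⟨_, (tsub_add_cancel_of_le (single_le_iff.mpr (Nat.one_le_iff_ne_zero.mpr hd))).symm⟩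
    rw [← monomial_mul_tP, map_mul]
    exact Ideal.mul_mem_left _ _ (Ideal.subset_span (Or.inl ⟨m, hm, rfl⟩))
  · obtain ⟨c, rfl⟩ : ∃ c, d = c + single (Sum.inr s) (2 ^ (n - s)) :=
      ⟨_, (tsub_add_cancel_of_le (single_le_iff.mpr hd)).symm⟩
    rw [← monomial_mul_xP_pow, map_mul]
    exact Ideal.mul_mem_left _ _ (Ideal.subset_span
      (Or.inr (by exact ⟨s + 1, n - s, by omega, by omega, rfl⟩)))

lemma mkDSA_relator (i : ℕ) : mkDSA k τ ρ (relator τ ρ i) = 0 :=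
  Ideal.Quotient.eq_zero_iff_mem.mpr (Ideal.subset_span ⟨i, rfl⟩)

lemma mkC_monomial_add_two (c : MotVar →₀ ℕ) (i : ℕ) :
    mkC τ ρ n (monomial (c + single (Sum.inl i) 2) 1) =
      relRHS τ ρ (fun d => mkC τ ρ n (monomial d 1)) c i := by
  have h : mkC τ ρ n (monomial c 1 * relator τ ρ i) = 0 := by
    rw [mkC_apply, map_mul, mkDSA_relator, mul_zero, map_zero]
  rwa [monomial_mul_relator, map_sub, sub_eq_zero, map_relRHS] at h

theorem mkC_monomial (d : MotVar →₀ ℕ) :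
    mkC τ ρ n (monomial d 1) = linearCombination k (monC τ ρ n) (nf τ ρ n d) := by
  by_cases hJ : JDivisible n d
  · rw [mkC_monomial_of_JDivisible τ ρ n hJ, nf_of_JDivisible τ ρ hJ, map_zero]
  by_cases hτ : ∃ i, 2 ≤ d (Sum.inl i)
  · obtain ⟨i, hi⟩ := hτ
    obtain ⟨c, hc⟩ := exists_eq_add_single_two hi
    rw [hc, mkC_monomial_add_two, nf_add_two, map_relRHS]
    simp only [relRHS, Function.comp_apply]
    rw [mkC_monomial (c + xExp i), mkC_monomial (c + tExp (i + 1)),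
      mkC_monomial (c + (tExp 0 + xExp i))]
  · have hτ' : ∀ i, d (Sum.inl i) ≤ 1 := fun i =>
      Nat.le_of_lt_succ (not_le.mp (not_exists.mp hτ i))
    have hd : d = (toIdxC d hJ hτ').1.1.sumElim (toIdxC d hJ hτ').1.2 :=
      (sumFinsuppEquivProdFinsupp.symm_apply_apply d).symm
    rw [hd, nf_sumElim, linearCombination_single, one_smul, mkC_monomial_sumElim]
termination_by wt d
decreasing_by all_goals simp only [hc, map_add, wt_single_inl, wt_single_inr]; omega

lemma mkC_eq_linearCombination_comp_nfL :
    mkC τ ρ n = linearCombination k (monC τ ρ n) ∘ₗ nfL τ ρ n :=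
  (basisMonomials MotVar k).ext fun d => by
    simp [mkC_monomial, nfL_monomial]

def reprC : Cn k τ ρ n →ₗ[k] (IdxC n →₀ k) :=
  (LinearMap.ker (mkC τ ρ n)).liftQ (nfL τ ρ n) (ker_mkC_le_ker_nfL τ ρ n) ∘ₗ
    ((mkC τ ρ n).quotKerEquivOfSurjective (mkC_surjective τ ρ n)).symm.toLinearMap

lemma reprC_mkC (x : MvPolynomial MotVar k) : reprC τ ρ n (mkC τ ρ n x) = nfL τ ρ n x := by
  simp [reprC, LinearMap.quotKerEquivOfSurjective_symm_apply]

def reprEquiv : Cn k τ ρ n ≃ₗ[k] (IdxC n →₀ k) :=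
  LinearEquiv.ofLinearMap (f := reprC τ ρ n) (g := linearCombination k (monC τ ρ n))
    (Finsupp.basisSingleOne.ext fun p => by
      simp [← mkC_monomial_sumElim, reprC_mkC, nfL_monomial, nf_sumElim])
    (LinearMap.ext fun x => by
      obtain ⟨y, rfl⟩ := mkC_surjective τ ρ n x
      rw [LinearMap.comp_apply, reprC_mkC, ← LinearMap.comp_apply,
        ← mkC_eq_linearCombination_comp_nfL]
      rfl)

end CnBasis

theorem statement5 (k : Type) [CommRing k] (τ ρ : k) (n : ℕ) :
    ∃ b : Module.Basis (IdxC n) k (Cn k τ ρ n),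
      ∀ p : IdxC n,
        b p = Ideal.Quotient.mk (Jideal k τ ρ n) (mkDSA k τ ρ (monP k p.1.1 p.1.2)) :=
  ⟨.ofRepr (CnBasis.reprEquiv τ ρ n), fun p => by
    simp [CnBasis.reprEquiv, CnBasis.monC]⟩

end
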